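/- arXiv:1708.05810 — 5 statements merged into one kernel-verified Lean document; each statement's English description precedes it below -/
import Mathlib

section
/- Let G be a finite graph that is the edge-disjoint union of cycles C_1, ..., C_k, each of length four, and a graph E, such that for every choice of halving each C_i (deleting two opposite edges of each four-cycle), the resulting subgraph is a two-factor of G (every vertex has degree exactly two). If G is connected, then G has a Hamiltonian cycle. -/
/-!
Every halving `f` leaves a two-factor `H f ≤ G`; pick `f` for which `H f` has the fewest
components. If `H f` were disconnected, some edge of the connected graph `G` would join two of its
components; it is a deleted edge `qr` of some four-cycle `pqrs` whose kept edges `pq`, `rs` then lie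
in different components. Re-halving that cycle trades `pq, rs` for `qr, sp`. Since a two-factor
has no bridges, `p, q` and `r, s` stay connected, while `qr` merges their components: fewer
components, a contradiction. So `H f` is connected, i.e. a Hamiltonian cycle of `G`.
-/

open SimpleGraph

namespace SimpleGraph

variable {V : Type*} {G H : SimpleGraph V}

lemma Reachable.of_forall_adj_reachable (h : ∀ u v, G.Adj u v → H.Reachable u v) {u v : V}
    (huv : G.Reachable u v) : H.Reachable u v := by
  rw [reachable_eq_reflTransGen] at h huv ⊢
  exact Relation.reflTransGen_closed h _ _ huv

lemma Connected.of_forall_adj_reachable (hG : G.Connected)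
    (h : ∀ u v, G.Adj u v → H.Reachable u v) : H.Connected :=
  (connected_iff H).mpr ⟨fun u v ↦ (hG u v).of_forall_adj_reachable h, hG.nonempty⟩

lemma card_connectedComponent_lt_of_forall_adj_reachable [Finite V]
    (h : ∀ u v, G.Adj u v → H.Reachable u v) {x y : V} (hH : H.Reachable x y)
    (hG : ¬G.Reachable x y) :
    Nat.card H.ConnectedComponent < Nat.card G.ConnectedComponent := by
  let φ : G.ConnectedComponent → H.ConnectedComponent :=
    ConnectedComponent.lift H.connectedComponentMk fun _ _ p _ ↦
      ConnectedComponent.eq.mpr (p.reachable.of_forall_adj_reachable h)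
  have hsurj : φ.Surjective := by
    intro C
    induction C using ConnectedComponent.ind with
    | h v => exact ⟨G.connectedComponentMk v, rfl⟩
  have hninj : ¬φ.Injective := fun hinj ↦
    hG (ConnectedComponent.eq.mp (hinj (ConnectedComponent.eq.mpr hH)))
  have := Fintype.ofFinite G.ConnectedComponent
  have := Fintype.ofFinite H.ConnectedComponent
  simpa only [Nat.card_eq_fintype_card] using
    Fintype.card_lt_of_surjective_not_injective φ hsurj hninj

lemma IsCycles.isHamiltonian [Fintype V] [DecidableEq V] (hcyc : G.IsCycles)
    (hconn : G.Connected) : G.IsHamiltonian := by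
  intro hcard
  obtain ⟨v⟩ := hconn.nonempty
  have : Nontrivial V := Fintype.one_lt_card_iff_nontrivial.mp <| by
    have := Fintype.card_pos_iff.mpr ⟨v⟩; omega
  obtain ⟨w, hwv⟩ := exists_ne v
  obtain ⟨p, hp, hverts⟩ := hcyc.exists_cycle_toSubgraph_verts_eq_connectedComponentSupp
    (c := G.connectedComponentMk v) rfl ((hconn v w).nonempty_neighborSet_left hwv.symm)
  refine ⟨v, p, hp, hp.isPath_tail.isHamiltonian_of_mem fun u ↦ ?_⟩
  have hu : u ∈ p.support := by
    rw [← p.mem_verts_toSubgraph, hverts, ConnectedComponent.mem_supp_iff,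
      ConnectedComponent.eq]
    exact hconn u v
  rw [← Walk.cons_support_tail hp.not_nil, List.mem_cons] at hu
  rcases hu with rfl | hu
  · exact p.tail.end_mem_support
  · exact hu

lemma IsCycles.reachable_deleteEdges_pair [Finite V] (hcyc : G.IsCycles) {p q r s : V}
    (hpq : G.Adj p q) (hpr : ¬G.Reachable p r) :
    (G.deleteEdges {s(p, q), s(r, s)}).Reachable p q := by
  classical
  obtain ⟨W⟩ := hcyc.reachable_deleteEdges hpq
  have hrs : s(r, s) ∉ W.edges := fun h ↦
    hpr ⟨(W.takeUntil r (W.fst_mem_support_of_mem_edges h)).mapLe (deleteEdges_le _)⟩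
  rw [Set.insert_eq, ← deleteEdges_deleteEdges]
  exact ⟨W.toDeleteEdges {s(r, s)} fun e he he' ↦ hrs (he' ▸ he)⟩

lemma IsCycles.card_connectedComponent_lt_of_switch [Finite V] (hcyc : G.IsCycles)
    {p q r s v w : V} (hpq : G.Adj p q) (hrs : G.Adj r s)
    (hle : G.deleteEdges {s(p, q), s(r, s)} ≤ H)
    (hvw : s(v, w) ∈ ({s(q, r), s(s, p)} : Set (Sym2 V))) (hHvw : H.Adj v w)
    (hGvw : ¬G.Reachable v w) :
    Nat.card H.ConnectedComponent < Nat.card G.ConnectedComponent := by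
  have hpr : ¬G.Reachable p r := by
    intro hpr
    apply hGvw
    rcases hvw with h | h <;> rcases Sym2.eq_iff.mp h with ⟨rfl, rfl⟩ | ⟨rfl, rfl⟩
    exacts [hpq.reachable.symm.trans hpr, (hpq.reachable.symm.trans hpr).symm,
      hrs.reachable.symm.trans hpr.symm, (hrs.reachable.symm.trans hpr.symm).symm]
  have hpq' : H.Reachable p q := (hcyc.reachable_deleteEdges_pair hpq hpr).mono hle
  have hrs' : H.Reachable r s := by
    rw [Set.pair_comm] at hle
    exact (hcyc.reachable_deleteEdges_pair hrs fun h ↦ hpr h.symm).mono hle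
  refine card_connectedComponent_lt_of_forall_adj_reachable (fun x y hxy ↦ ?_) hHvw.reachable hGvw
  by_cases he : s(x, y) ∈ ({s(p, q), s(r, s)} : Set (Sym2 V))
  · rcases he with h | h <;> rcases Sym2.eq_iff.mp h with ⟨rfl, rfl⟩ | ⟨rfl, rfl⟩
    exacts [hpq', hpq'.symm, hrs', hrs'.symm]
  · exact (hle ((deleteEdges_adj ..).mpr ⟨hxy, he⟩)).reachable

theorem isHamiltonian_of_switch {β : Type*} [Fintype V] [DecidableEq V] [Finite β] [Nonempty β]
    (hG : G.Connected) (F : β → SimpleGraph V) (hFG : ∀ f, F f ≤ G)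
    (hF : ∀ f, (F f).IsCycles)
    (hswitch : ∀ f v w, G.Adj v w → ¬(F f).Adj v w → ∃ g p q r s,
      (F f).Adj p q ∧ (F f).Adj r s ∧ (F f).deleteEdges {s(p, q), s(r, s)} ≤ F g ∧
      s(v, w) ∈ ({s(q, r), s(s, p)} : Set (Sym2 V)) ∧ (F g).Adj v w) :
    G.IsHamiltonian := by
  obtain ⟨f, hmin⟩ := Finite.exists_min fun f ↦ Nat.card (F f).ConnectedComponent
  by_cases hconn : (F f).Connected
  · exact ((hF f).isHamiltonian hconn).mono (hFG f)
  obtain ⟨v, w, hvw, hnr⟩ : ∃ v w, G.Adj v w ∧ ¬(F f).Reachable v w := by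
    by_contra! h
    exact hconn (hG.of_forall_adj_reachable h)
  obtain ⟨g, p, q, r, s, hpq, hrs, hle, hmem, hadj⟩ :=
    hswitch f v w hvw fun h ↦ hnr h.reachable
  exact absurd (hmin g)
    ((hF f).card_connectedComponent_lt_of_switch hpq hrs hle hmem hadj hnr).not_ge

end SimpleGraph

section Halving

variable {V : Type*} {k : ℕ} {a b c d : Fin k → V}
  {half : (Fin k → Bool) → Fin k → Set (Sym2 V)}

lemma iUnion_half_diff_half_subset
    (hhalf : ∀ f i, half f i =
      if f i then {s(a i, b i), s(c i, d i)} else {s(b i, c i), s(d i, a i)})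
    (f : Fin k → Bool) (i : Fin k) (t : Bool) :
    (⋃ j, half f j) \ half f i ⊆ ⋃ j, half (Function.update f i t) j := by
  rintro e ⟨he, hei⟩
  obtain ⟨j, hj⟩ := Set.mem_iUnion.mp he
  have hji : j ≠ i := by rintro rfl; exact hei hj
  refine Set.mem_iUnion_of_mem j ?_
  rwa [hhalf, Function.update_of_ne hji, ← hhalf]

lemma half_union_half_update_not_eq {cyc : Fin k → Set (Sym2 V)}
    (hcyc : ∀ i, cyc i = {s(a i, b i), s(b i, c i), s(c i, d i), s(d i, a i)})
    (hhalf : ∀ f i, half f i =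
      if f i then {s(a i, b i), s(c i, d i)} else {s(b i, c i), s(d i, a i)})
    (f : Fin k → Bool) (i : Fin k) :
    half f i ∪ half (Function.update f i (!f i)) i = cyc i := by
  ext e
  rw [hcyc, hhalf, hhalf, Function.update_self]
  cases f i <;> simp <;> tauto

lemma exists_half_eq_pair_and_half_update_not_eq_pair
    (hhalf : ∀ f i, half f i =
      if f i then {s(a i, b i), s(c i, d i)} else {s(b i, c i), s(d i, a i)})
    (f : Fin k → Bool) (i : Fin k) :
    ∃ p q r s, half f i = {s(p, q), s(r, s)} ∧
      half (Function.update f i (!f i)) i = {s(q, r), s(s, p)} := by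
  simp only [hhalf, Function.update_self]
  cases f i
  · exact ⟨b i, c i, d i, a i, by simp, by simp [Set.pair_comm]⟩
  · exact ⟨a i, b i, c i, d i, by simp, by simp⟩

end Halving

theorem lemma_two_general {V : Type*} [Fintype V] [DecidableEq V] (G : SimpleGraph V) (k : ℕ)
    (a b c d : Fin k → V) (E : Set (Sym2 V))
    (cyc : Fin k → Set (Sym2 V))
    (hcyc : ∀ i, cyc i = {s(a i, b i), s(b i, c i), s(c i, d i), s(d i, a i)})
    (half : (Fin k → Bool) → Fin k → Set (Sym2 V))
    (hhalf : ∀ f i, half f i =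
      if f i then {s(a i, b i), s(c i, d i)} else {s(b i, c i), s(d i, a i)})
    (hunion : G.edgeSet = E ∪ ⋃ i, cyc i)
    (htwofactor : ∀ f : Fin k → Bool, ∀ v : V,
      {w | s(v, w) ∈ E ∪ ⋃ i, half f i}.ncard = 2)
    (hconn : G.Connected) :
    G.IsHamiltonian := by
  set N : (Fin k → Bool) → Set (Sym2 V) := fun f ↦ E ∪ ⋃ i, half f i
  have hcyc_eq := half_union_half_update_not_eq hcyc hhalf
  have hNG : ∀ f, N f ⊆ G.edgeSet := fun f ↦ hunion ▸
    Set.union_subset_union_right _ (Set.iUnion_mono fun i ↦ hcyc_eq f i ▸ Set.subset_union_left)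
  have hadj : ∀ f v w, (fromEdgeSet (N f)).Adj v w ↔ s(v, w) ∈ N f :=
    fun f v w ↦ ⟨fun h ↦ h.1, fun h ↦ ⟨h, G.ne_of_adj (hNG f h)⟩⟩
  have hadj_half : ∀ f i v w, s(v, w) ∈ half f i → (fromEdgeSet (N f)).Adj v w :=
    fun f i v w h ↦ (hadj f v w).mpr (.inr (Set.mem_iUnion_of_mem i h))
  refine isHamiltonian_of_switch hconn (fun f ↦ fromEdgeSet (N f))
    (fun f v w h ↦ hNG f ((hadj f v w).mp h))
    (fun f v _ ↦ (congrArg Set.ncard (Set.ext (hadj f v))).trans (htwofactor f v))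
    fun f v w hvw hnadj ↦ ?_
  obtain ⟨i, hi⟩ : ∃ i, s(v, w) ∈ cyc i := Set.mem_iUnion.mp <|
    (hunion ▸ hvw : s(v, w) ∈ E ∪ ⋃ i, cyc i).resolve_left
      fun h ↦ hnadj ((hadj f v w).mpr (.inl h))
  set g := Function.update f i (!f i)
  have hvw_g : s(v, w) ∈ half g i :=
    ((hcyc_eq f i).symm ▸ hi).resolve_left fun h ↦ hnadj (hadj_half f i v w h)
  have hle : (fromEdgeSet (N f)).deleteEdges (half f i) ≤ fromEdgeSet (N g) := by
    rw [deleteEdges_fromEdgeSet, Set.union_sdiff_distrib]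
    exact fromEdgeSet_mono
      (Set.union_subset_union Set.sdiff_subset (iUnion_half_diff_half_subset hhalf f i _))
  obtain ⟨p, q, r, s, h₀, h₁⟩ := exists_half_eq_pair_and_half_update_not_eq_pair hhalf f i
  exact ⟨g, p, q, r, s, hadj_half f i p q (by simp [h₀]), hadj_half f i r s (by simp [h₀]),
    h₀ ▸ hle, h₁ ▸ hvw_g, hadj_half g i v w hvw_g⟩

/-- **Lemma 2 setup.**  `G` is the edge-disjoint union of the four-cycles
`(a i) (b i) (c i) (d i)`, `i = 1, …, k`, and the edge set `E`; `cyc i` is the edge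
set of the `i`-th four-cycle, and `half f i` is the pair of opposite edges of the
`i`-th four-cycle kept by the halving choice `f i`. -/
theorem lemma_two {V : Type*} [Fintype V] [DecidableEq V] (G : SimpleGraph V) (k : ℕ)
    (a b c d : Fin k → V) (E : Set (Sym2 V))
    (cyc : Fin k → Set (Sym2 V))
    (hcyc : ∀ i, cyc i = {s(a i, b i), s(b i, c i), s(c i, d i), s(d i, a i)})
    (half : (Fin k → Bool) → Fin k → Set (Sym2 V))
    (hhalf : ∀ f i, half f i =
      if f i then {s(a i, b i), s(c i, d i)} else {s(b i, c i), s(d i, a i)})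
    (hdist : ∀ i, a i ≠ b i ∧ a i ≠ c i ∧ a i ≠ d i ∧
      b i ≠ c i ∧ b i ≠ d i ∧ c i ≠ d i)
    (hunion : G.edgeSet = E ∪ ⋃ i, cyc i)
    (hEC : ∀ i, Disjoint E (cyc i))
    (hCC : ∀ i j, i ≠ j → Disjoint (cyc i) (cyc j))
    (htwofactor : ∀ f : Fin k → Bool, ∀ v : V,
      {w | s(v, w) ∈ E ∪ ⋃ i, half f i}.ncard = 2)
    (hconn : G.Connected) :
    G.IsHamiltonian :=
  lemma_two_general G k a b c d E cyc hcyc half hhalf hunion htwofactor hconn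
end

section
/- For nonnegative integers m, n with gcd(m - n, m + n) = 1 and m + n odd, write m + n = 2t + 1. The crisscross graph R(m, n) has vertex set all triples (x, y, f) with -t ≤ x ≤ t, -t ≤ y ≤ t, f ∈ {1, 2}, and edges as follows: (x1,y1,1)~(x2,y2,1) iff (x2,y2) = (x1,y1) ± (m,n) or (x1,y1) ± (-n,m); (x1,y1,2)~(x2,y2,2) iff (x2,y2) = (x1,y1) ± (n,m) or (x1,y1) ± (-m,n); (x1,y1,f1)~(x2,y2,f2) with f1 ≠ f2 iff (x2,y2) = (x1,y1) ± (±m, m) or (x1,y1) ± (±n, n). Then R(m, n) is connected. -/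
/-- Vertices of the crisscross graph with parameter `t`: triples `(x, y, f)` with
`-t ≤ x, y ≤ t` and a floor `f` (encoded as a `Bool`: `false` is the first floor,
`true` is the second floor). -/
abbrev CCVert (t : ℤ) := {u : ℤ × ℤ // -t ≤ u.1 ∧ u.1 ≤ t ∧ -t ≤ u.2 ∧ u.2 ≤ t} × Bool

/-- The adjacency conditions of the crisscross graph `R(m, n)`. -/
def CCRel (m n : ℤ) {t : ℤ} (u v : CCVert t) : Prop :=
  (u.2 = false ∧ v.2 = false ∧
    ((v.1.1.1 - u.1.1.1, v.1.1.2 - u.1.1.2) = ((m, n) : ℤ × ℤ) ∨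
     (v.1.1.1 - u.1.1.1, v.1.1.2 - u.1.1.2) = ((-m, -n) : ℤ × ℤ) ∨
     (v.1.1.1 - u.1.1.1, v.1.1.2 - u.1.1.2) = ((-n, m) : ℤ × ℤ) ∨
     (v.1.1.1 - u.1.1.1, v.1.1.2 - u.1.1.2) = ((n, -m) : ℤ × ℤ))) ∨
  (u.2 = true ∧ v.2 = true ∧
    ((v.1.1.1 - u.1.1.1, v.1.1.2 - u.1.1.2) = ((n, m) : ℤ × ℤ) ∨
     (v.1.1.1 - u.1.1.1, v.1.1.2 - u.1.1.2) = ((-n, -m) : ℤ × ℤ) ∨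
     (v.1.1.1 - u.1.1.1, v.1.1.2 - u.1.1.2) = ((-m, n) : ℤ × ℤ) ∨
     (v.1.1.1 - u.1.1.1, v.1.1.2 - u.1.1.2) = ((m, -n) : ℤ × ℤ))) ∨
  (u.2 ≠ v.2 ∧
    ((v.1.1.1 - u.1.1.1, v.1.1.2 - u.1.1.2) = ((m, m) : ℤ × ℤ) ∨
     (v.1.1.1 - u.1.1.1, v.1.1.2 - u.1.1.2) = ((-m, -m) : ℤ × ℤ) ∨
     (v.1.1.1 - u.1.1.1, v.1.1.2 - u.1.1.2) = ((-m, m) : ℤ × ℤ) ∨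
     (v.1.1.1 - u.1.1.1, v.1.1.2 - u.1.1.2) = ((m, -m) : ℤ × ℤ) ∨
     (v.1.1.1 - u.1.1.1, v.1.1.2 - u.1.1.2) = ((n, n) : ℤ × ℤ) ∨
     (v.1.1.1 - u.1.1.1, v.1.1.2 - u.1.1.2) = ((-n, -n) : ℤ × ℤ) ∨
     (v.1.1.1 - u.1.1.1, v.1.1.2 - u.1.1.2) = ((-n, n) : ℤ × ℤ) ∨
     (v.1.1.1 - u.1.1.1, v.1.1.2 - u.1.1.2) = ((n, -n) : ℤ × ℤ)))

/-- The crisscross graph `R(m, n)` (with `m + n = 2t + 1`).  The displacement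
conditions in `CCRel` are invariant under swapping the two endpoints, so
symmetrising does not change the edge set. -/
def crisscross (m n t : ℤ) : SimpleGraph (CCVert t) where
  Adj u v := u ≠ v ∧ (CCRel m n u v ∨ CCRel m n v u)
  symm := by
    constructor
    rintro u v ⟨h1, h2⟩
    exact ⟨h1.symm, h2.symm⟩
  loopless := ⟨fun u h => h.1 rfl⟩

/-!
The coordinates `-t, …, t` are a system of residues modulo `m + n = 2t + 1`, and `wrap` picks
the representative. Let `S` and `T` be the moves `(x, y) ↦ (x - n, y - n)` and
`(x, y) ↦ (x + n, y - n)` modulo `2t + 1`. At every vertex some edge realises `T`, unless exactly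
one coordinate wraps around and the floor is the wrong one; in that case some edge realises `S`.
The move `S` preserves the class of `y - x` modulo `2t + 1`, and `T` shifts it by `-2n`, which
generates `ℤ/(2t + 1)` because `gcd(2n, m + n) = gcd(m - n, m + n) = 1`.

On the diagonal every `S`-edge changes floor and the `S`-orbit has odd length `2t + 1`, so the
diagonal is connected. Suppose the class `d - 2n` lies in the component of the diagonal but some
vertex of class `d` does not. No `T`-edge leaves a vertex of class `d` outside that component,
so `S`-edges carry such a vertex around its whole `S`-orbit, and at every step `x > t - n` holds
exactly when `y ≥ n - t` does. Over one period the first condition holds `n` times and the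
second `m` times, so `m = n`, contradicting `m + n` odd.
-/

namespace Crisscross

open Finset

def wrap (t z : ℤ) : ℤ := (z + t) % (2 * t + 1) - t

section Wrap
variable {t : ℤ}

lemma wrap_mem (ht : 0 ≤ t) (z : ℤ) : -t ≤ wrap t z ∧ wrap t z ≤ t := by
  have h₀ := Int.emod_nonneg (z + t) (b := 2 * t + 1) (by omega)
  have h₁ := Int.emod_lt_of_pos (z + t) (b := 2 * t + 1) (by omega)
  unfold wrap
  omega

lemma wrap_modEq (t z : ℤ) : wrap t z ≡ z [ZMOD 2 * t + 1] := by
  have := Int.mod_modEq (z + t) (2 * t + 1)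
  simpa [wrap] using this.sub_right t

lemma eq_of_modEq_of_mem {a b : ℤ} (ha : -t ≤ a ∧ a ≤ t) (hb : -t ≤ b ∧ b ≤ t)
    (h : a ≡ b [ZMOD 2 * t + 1]) : a = b := by
  have := Int.eq_zero_of_abs_lt_dvd (Int.ModEq.dvd h) (by rw [abs_lt]; omega)
  omega

lemma bijOn_wrap_sub_mul {a : ℤ} (ha : IsCoprime (2 * t + 1) a) (x : ℤ) :
    Set.BijOn (fun k : ℕ => wrap t (x - a * k)) (range (2 * t + 1).toNat) (Icc (-t) t) := by
  set f := fun k : ℕ => wrap t (x - a * k)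
  have hmaps : Set.MapsTo f (range (2 * t + 1).toNat) (Icc (-t) t) := fun k hk =>
    mem_Icc.2 (wrap_mem (by simp only [coe_range, Set.mem_Iio] at hk; omega) _)
  have hinj : Set.InjOn f (range (2 * t + 1).toNat) := by
    intro j hj k hk (hjk : wrap t (x - a * j) = wrap t (x - a * k))
    have hmod : x - a * j ≡ x - a * k [ZMOD 2 * t + 1] :=
      (wrap_modEq t _).symm.trans (hjk ▸ wrap_modEq t _)
    have hdvd : 2 * t + 1 ∣ a * ((j : ℤ) - k) := by
      simpa [mul_sub] using hmod.dvd
    have := Int.eq_zero_of_abs_lt_dvd (ha.dvd_of_dvd_mul_left hdvd) (by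
      simp only [coe_range, Set.mem_Iio] at hj hk; rw [abs_lt]; omega)
    omega
  refine ⟨hmaps, hinj, surjOn_of_injOn_of_card_le _ hmaps hinj ?_⟩
  simp only [Int.card_Icc, card_range]
  omega

lemma card_filter_wrap_sub_mul {a : ℤ} (ha : IsCoprime (2 * t + 1) a) (x : ℤ) (P : ℤ → Prop)
    [DecidablePred P] :
    #{k ∈ range (2 * t + 1).toNat | P (wrap t (x - a * (k : ℕ)))} =
      #{w ∈ Icc (-t) t | P w} := by
  have h := bijOn_wrap_sub_mul ha x
  refine card_nbij _ (fun k hk => ?_) (h.injOn.mono fun k hk => ?_) (fun w hw => ?_)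
  · simp only [coe_filter, Set.mem_ofPred_eq] at hk ⊢
    exact ⟨h.mapsTo hk.1, hk.2⟩
  · exact (mem_filter.1 hk).1
  · simp only [coe_filter, Set.mem_ofPred_eq] at hw
    obtain ⟨k, hk, rfl⟩ := h.surjOn hw.1
    exact ⟨k, mem_coe.2 (mem_filter.2 ⟨hk, hw.2⟩), rfl⟩

lemma exists_not_iff_wrap_sub_mul {n : ℤ} (hn : 0 ≤ n) (hnt : n ≤ 2 * t + 1)
    (hcop : IsCoprime (2 * t + 1) n) (x y : ℤ) :
    ∃ k : ℕ, ¬ (t - n < wrap t (x - n * k) ↔ n - t ≤ wrap t (y - n * k)) := by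
  by_contra! h
  have hcount : #{w ∈ Icc (-t) t | t - n < w} = #{w ∈ Icc (-t) t | n - t ≤ w} := by
    rw [← card_filter_wrap_sub_mul hcop x, ← card_filter_wrap_sub_mul hcop y]
    exact congrArg card (filter_congr fun k _ => h k)
  have htop : {w ∈ Icc (-t) t | t - n < w} = Icc (t - n + 1) t := by
    ext w; simp only [mem_filter, mem_Icc]; omega
  have hbot : {w ∈ Icc (-t) t | n - t ≤ w} = Icc (n - t) t := by
    ext w; simp only [mem_filter, mem_Icc]; omega
  rw [htop, hbot, Int.card_Icc, Int.card_Icc] at hcount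
  -- the counts are `n` and `2t + 1 - n`, of different parity
  omega

lemma exists_modEq_mul_natCast (ht : 0 ≤ t) {a : ℤ} (ha : IsCoprime (2 * t + 1) a) (d : ℤ) :
    ∃ j : ℕ, d ≡ a * j [ZMOD 2 * t + 1] := by
  obtain ⟨j, -, hj⟩ := (bijOn_wrap_sub_mul ha d).surjOn (mem_Icc.2 ⟨by omega, ht⟩)
  have hj : wrap t (d - a * j) = 0 := hj
  have h := (hj ▸ wrap_modEq t (d - a * j)).add_right (a * j)
  exact ⟨j, by simpa using h.symm⟩

end Wrap

section Graph
variable {m n t : ℤ}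

lemma fst_eq_wrap (v : CCVert t) {z : ℤ} (h : v.1.1.1 ≡ z [ZMOD 2 * t + 1]) :
    v.1.1.1 = wrap t z :=
  eq_of_modEq_of_mem ⟨v.1.2.1, v.1.2.2.1⟩ (wrap_mem (by linarith [v.1.2.1, v.1.2.2.1]) z)
    (h.trans (wrap_modEq t z).symm)

lemma snd_eq_wrap (v : CCVert t) {z : ℤ} (h : v.1.1.2 ≡ z [ZMOD 2 * t + 1]) :
    v.1.1.2 = wrap t z :=
  eq_of_modEq_of_mem ⟨v.1.2.2.2.1, v.1.2.2.2.2⟩ (wrap_mem (by linarith [v.1.2.1, v.1.2.2.1]) z)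
    (h.trans (wrap_modEq t z).symm)

lemma adj_of_ccRel (hmn : m + n ≠ 0) {u v : CCVert t} (h : CCRel m n u v) :
    (crisscross m n t).Adj u v :=
  ⟨by rintro rfl; simp [CCRel] at h; omega, Or.inl h⟩

lemma exists_adj_tMove_or_sMove (hm : 0 ≤ m) (hn : 0 ≤ n) (ht : m + n = 2 * t + 1)
    (v : CCVert t) :
    (∃ w, (crisscross m n t).Adj v w ∧
      w.1.1.2 - w.1.1.1 ≡ v.1.1.2 - v.1.1.1 - 2 * n [ZMOD 2 * t + 1]) ∨
    ((t - n < v.1.1.1 ↔ n - t ≤ v.1.1.2) ∧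
      ∃ w, (crisscross m n t).Adj v w ∧
        w.1.1.1 ≡ v.1.1.1 - n [ZMOD 2 * t + 1] ∧ w.1.1.2 ≡ v.1.1.2 - n [ZMOD 2 * t + 1]) := by
  obtain ⟨⟨⟨x, y⟩, hx₁, hx₂, hy₁, hy₂⟩, g⟩ := v
  have hmn : m + n ≠ 0 := by omega
  dsimp only
  by_cases hA : t - n < x <;> by_cases hB : y < n - t
  · exact Or.inl ⟨(⟨(x - m, y + m), by omega⟩, !g), adj_of_ccRel hmn (by simp [CCRel]),
      Int.modEq_iff_dvd.2 ⟨-2, by dsimp only; omega⟩⟩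
  · cases g
    · exact Or.inl ⟨(⟨(x - m, y - n), by omega⟩, false),
        adj_of_ccRel hmn (by simp [CCRel]), Int.modEq_iff_dvd.2 ⟨-1, by dsimp only; omega⟩⟩
    refine Or.inr ⟨by omega, ?_⟩
    by_cases hx : x < n - t
    · exact ⟨(⟨(x + m, y - n), by omega⟩, true), adj_of_ccRel hmn (by simp [CCRel]),
        Int.modEq_iff_dvd.2 ⟨-1, by dsimp only; omega⟩,
        Int.modEq_iff_dvd.2 ⟨0, by dsimp only; omega⟩⟩
    · exact ⟨(⟨(x - n, y - n), by omega⟩, false), adj_of_ccRel hmn (by simp [CCRel]),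
        Int.modEq_iff_dvd.2 ⟨0, by dsimp only; omega⟩,
        Int.modEq_iff_dvd.2 ⟨0, by dsimp only; omega⟩⟩
  · cases g
    swap
    · exact Or.inl ⟨(⟨(x + n, y + m), by omega⟩, true),
        adj_of_ccRel hmn (by simp [CCRel]), Int.modEq_iff_dvd.2 ⟨-1, by dsimp only; omega⟩⟩
    refine Or.inr ⟨by omega, ?_⟩
    by_cases hx : x < n - t
    · exact ⟨(⟨(x + m, y + m), by omega⟩, true), adj_of_ccRel hmn (by simp [CCRel]),
        Int.modEq_iff_dvd.2 ⟨-1, by dsimp only; omega⟩,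
        Int.modEq_iff_dvd.2 ⟨-1, by dsimp only; omega⟩⟩
    · exact ⟨(⟨(x - n, y + m), by omega⟩, false), adj_of_ccRel hmn (by simp [CCRel]),
        Int.modEq_iff_dvd.2 ⟨0, by dsimp only; omega⟩,
        Int.modEq_iff_dvd.2 ⟨-1, by dsimp only; omega⟩⟩
  · exact Or.inl ⟨(⟨(x + n, y - n), by omega⟩, !g), adj_of_ccRel hmn (by simp [CCRel]),
      Int.modEq_iff_dvd.2 ⟨0, by dsimp only; omega⟩⟩

lemma exists_adj_sMove_of_diag (hm : 0 ≤ m) (hn : 0 ≤ n) (ht : m + n = 2 * t + 1) :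
    ∀ v : CCVert t, v.1.1.1 = v.1.1.2 → ∃ w, (crisscross m n t).Adj v w ∧
      w.1.1.1 = w.1.1.2 ∧ w.1.1.1 ≡ v.1.1.1 - n [ZMOD 2 * t + 1] ∧ w.2 = !v.2 := by
  rintro ⟨⟨⟨z, _⟩, hz₁, hz₂, -, -⟩, g⟩ (rfl : z = _)
  have hmn : m + n ≠ 0 := by omega
  by_cases hz : z < n - t
  · exact ⟨(⟨(z + m, z + m), by omega⟩, !g), adj_of_ccRel hmn (by simp [CCRel]), rfl,
      Int.modEq_iff_dvd.2 ⟨-1, by dsimp only; omega⟩, rfl⟩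
  · exact ⟨(⟨(z - n, z - n), by omega⟩, !g), adj_of_ccRel hmn (by simp [CCRel]), rfl,
      Int.modEq_iff_dvd.2 ⟨0, by dsimp only; omega⟩, rfl⟩

lemma exists_reachable_diag_orbit (hm : 0 ≤ m) (hn : 0 ≤ n) (ht : m + n = 2 * t + 1)
    {u : CCVert t} (hu : u.1.1.1 = u.1.1.2) (k : ℕ) :
    ∃ w, (crisscross m n t).Reachable u w ∧ w.1.1.1 = w.1.1.2 ∧
      w.1.1.1 ≡ u.1.1.1 - n * k [ZMOD 2 * t + 1] ∧ w.2 = (u.2 ^^ k.bodd) := by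
  induction k with
  | zero => exact ⟨u, .refl _, hu, by simp, by simp⟩
  | succ k ih =>
    obtain ⟨w, hw, hwd, hwx, hwf⟩ := ih
    obtain ⟨w', hadj, hw'd, hw'x, hw'f⟩ := exists_adj_sMove_of_diag hm hn ht w hwd
    have hk : u.1.1.1 - n * k - n = u.1.1.1 - n * ↑(k + 1) := by push_cast; ring
    refine ⟨w', hw.trans hadj.reachable, hw'd, hk ▸ hw'x.trans (hwx.sub_right n), ?_⟩
    rw [hw'f, hwf, Nat.bodd_succ]
    cases u.2 <;> simp

lemma reachable_of_diag (hm : 0 ≤ m) (hn : 0 ≤ n) (ht : m + n = 2 * t + 1)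
    (hcop : IsCoprime (2 * t + 1) n) {u v : CCVert t} (hu : u.1.1.1 = u.1.1.2)
    (hv : v.1.1.1 = v.1.1.2) :
    (crisscross m n t).Reachable u v := by
  obtain ⟨k, -, hk⟩ :=
    (bijOn_wrap_sub_mul hcop u.1.1.1).surjOn (mem_Icc.2 ⟨v.1.2.1, v.1.2.2.1⟩)
  -- `k` and `k + (2t + 1)` lead to the same point on opposite floors
  obtain ⟨k', hk'x, hk'f⟩ : ∃ k' : ℕ,
      u.1.1.1 - n * k' ≡ u.1.1.1 - n * k [ZMOD 2 * t + 1] ∧ (u.2 ^^ k'.bodd) = v.2 := by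
    by_cases h : (u.2 ^^ k.bodd) = v.2
    · exact ⟨k, rfl, h⟩
    · obtain ⟨s, rfl⟩ := Int.eq_ofNat_of_zero_le (by omega : 0 ≤ t)
      refine ⟨k + (2 * s + 1), Int.modEq_iff_dvd.2 ⟨n, by push_cast; ring⟩, ?_⟩
      revert h
      simp only [Nat.bodd_add, Nat.bodd_mul, Nat.bodd_two, Nat.bodd_one, Bool.false_and]
      cases u.2 <;> cases k.bodd <;> cases v.2 <;> decide
  obtain ⟨w, hw, hwd, hwx, hwf⟩ := exists_reachable_diag_orbit hm hn ht hu k'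
  have hx : w.1.1.1 = v.1.1.1 := (fst_eq_wrap w (hwx.trans hk'x)).trans hk
  obtain rfl : w = v := Prod.ext (Subtype.ext (Prod.ext hx (hwd ▸ hv ▸ hx))) (hwf.trans hk'f)
  exact hw

lemma reachable_of_reachable_tMove_class (hm : 0 ≤ m) (hn : 0 ≤ n) (ht : m + n = 2 * t + 1)
    (hcop : IsCoprime (2 * t + 1) n) (o v : CCVert t)
    (hprev : ∀ w : CCVert t, w.1.1.2 - w.1.1.1 ≡ v.1.1.2 - v.1.1.1 - 2 * n [ZMOD 2 * t + 1] →
      (crisscross m n t).Reachable o w) :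
    (crisscross m n t).Reachable o v := by
  by_contra hv
  have step : ∀ w : CCVert t, ¬ (crisscross m n t).Reachable o w →
      w.1.1.2 - w.1.1.1 ≡ v.1.1.2 - v.1.1.1 [ZMOD 2 * t + 1] →
      (t - n < w.1.1.1 ↔ n - t ≤ w.1.1.2) ∧ ∃ w', ¬ (crisscross m n t).Reachable o w' ∧
        w'.1.1.1 ≡ w.1.1.1 - n [ZMOD 2 * t + 1] ∧
        w'.1.1.2 ≡ w.1.1.2 - n [ZMOD 2 * t + 1] := by
    intro w hw hcls
    rcases exists_adj_tMove_or_sMove hm hn ht w with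
      ⟨w', hadj, hw'⟩ | ⟨hiff, w', hadj, hx, hy⟩
    · exact absurd ((hprev w' (hw'.trans (hcls.sub_right _))).trans hadj.symm.reachable) hw
    · exact ⟨hiff, w', fun h => hw (h.trans hadj.symm.reachable), hx, hy⟩
  have orbit : ∀ k : ℕ, ∃ w, ¬ (crisscross m n t).Reachable o w ∧
      w.1.1.1 ≡ v.1.1.1 - n * k [ZMOD 2 * t + 1] ∧
      w.1.1.2 ≡ v.1.1.2 - n * k [ZMOD 2 * t + 1] := by
    intro k
    induction k with
    | zero => exact ⟨v, hv, by simp, by simp⟩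
    | succ k ih =>
      obtain ⟨w, hw, hx, hy⟩ := ih
      obtain ⟨-, w', hw', hx', hy'⟩ := step w hw (by simpa using hy.sub hx)
      have hk (z : ℤ) : z - n * k - n = z - n * ↑(k + 1) := by push_cast; ring
      exact ⟨w', hw', hk _ ▸ hx'.trans (hx.sub_right n), hk _ ▸ hy'.trans (hy.sub_right n)⟩
  obtain ⟨k, hk⟩ := exists_not_iff_wrap_sub_mul hn (by omega) hcop v.1.1.1 v.1.1.2
  obtain ⟨w, hw, hx, hy⟩ := orbit k
  rw [← fst_eq_wrap w hx, ← snd_eq_wrap w hy] at hk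
  exact hk (step w hw (by simpa using hy.sub hx)).1

end Graph
end Crisscross

open Crisscross

/-- Every crisscross graph `R(m, n)` (with `m`, `n` nonnegative, `gcd(m-n, m+n) = 1`
and `m + n = 2t + 1`) is connected. -/
theorem crisscross_connected (m n t : ℤ) (hm : 0 ≤ m) (hn : 0 ≤ n)
    (hcop : Int.gcd (m - n) (m + n) = 1) (ht : m + n = 2 * t + 1) :
    (crisscross m n t).Connected := by
  obtain ⟨a, b, hab⟩ := Int.isCoprime_iff_gcd_eq_one.2 hcop
  have hcop₂ : IsCoprime (2 * t + 1) (2 * n) :=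
    ⟨a + b, -a, by linear_combination hab - (a + b) * ht⟩
  have hcop₁ : IsCoprime (2 * t + 1) n := hcop₂.of_mul_right_right
  let o : CCVert t := (⟨(0, 0), by omega⟩, false)
  have hclass (j : ℕ) (v : CCVert t) (hv : v.1.1.2 - v.1.1.1 ≡ 2 * n * j [ZMOD 2 * t + 1]) :
      (crisscross m n t).Reachable o v := by
    induction j generalizing v with
    | zero =>
      have hxy : v.1.1.1 ≡ v.1.1.2 [ZMOD 2 * t + 1] :=
        Int.modEq_iff_dvd.2 (by simpa using hv.symm.dvd)
      exact reachable_of_diag hm hn ht hcop₁ rfl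
        ((fst_eq_wrap v hxy).trans (snd_eq_wrap v rfl).symm)
    | succ j ih =>
      have e : 2 * n * ↑(j + 1) - 2 * n = 2 * n * j := by push_cast; ring
      exact reachable_of_reachable_tMove_class hm hn ht hcop₁ o v fun w hw =>
        ih w (e ▸ hw.trans (hv.sub_right _))
  have hreach (v : CCVert t) : (crisscross m n t).Reachable o v :=
    let ⟨j, hj⟩ := exists_modEq_mul_natCast (by omega) hcop₂ (v.1.1.2 - v.1.1.1)
    hclass j v hj
  exact (SimpleGraph.connected_iff _).2 ⟨fun u v => (hreach u).symm.trans (hreach v), ⟨o⟩⟩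
end

section
/- If 0 < m < n, 2m ≤ n < 3m, and gcd(m - n, m + n) = 1, then setting m' = n - 2m and n' = m, one has m' < n', gcd(m' - n', m' + n') = 1, and m' + n' < m + n. -/
/-- Case 2 reduction (`2m ≤ n < 3m`) in the proof that crisscross graphs are connected:
if `0 < m < n`, `2m ≤ n < 3m`, and `gcd(m - n, m + n) = 1`, then with `m' = n - 2m` and
`n' = m` one has `m' < n'`, `gcd(m' - n', m' + n') = 1`, and `m' + n' < m + n`. -/
theorem crisscross_reduction_case2 (m n : ℤ) (hm : 0 < m) (hmn : m < n)
    (h2 : 2 * m ≤ n) (h3 : n < 3 * m) (hcop : Int.gcd (m - n) (m + n) = 1) :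
    n - 2 * m < m ∧
    Int.gcd ((n - 2 * m) - m) ((n - 2 * m) + m) = 1 ∧
    (n - 2 * m) + m < m + n := by
  refine ⟨by linarith, ?_, by linarith⟩
  have hc : IsCoprime (m - n) (m + n) := Int.isCoprime_iff_gcd_eq_one.mpr hcop
  have hc2 : IsCoprime ((m + n) + (m - n) * 2) (m - n) := hc.symm.add_mul_left_left 2
  have hc3 : IsCoprime (-((m + n) + (m - n) * 2)) (-(m - n)) := hc2.neg_left.neg_right
  have : IsCoprime ((n - 2 * m) - m) ((n - 2 * m) + m) := by
    convert hc3 using 1 <;> ring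
  exact Int.isCoprime_iff_gcd_eq_one.mp this
end

section
/- Let p < q be positive integers, let r = q - p, and suppose gcd(p - q, p + q) = 1. Let m be the common remainder of p and q upon division by r (i.e., m = p mod r = q mod r), and let n = r - m. Then gcd(m - n, m + n) = 1. -/
/-! Both coprimality conditions reduce to one about `2 * _` and the sum or difference:
`gcd(p - q, p + q) = gcd(q - p, 2p)` and `gcd(m - n, m + n) = gcd(m + n, 2m) = gcd(r, 2m)`.
Since `m ≡ p (mod r)`, the last one equals `gcd(r, 2p) = 1`. -/

section CommRing

variable {R : Type*} [CommRing R]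

theorem isCoprime_sub_add_iff_add_two_mul (x y : R) :
    IsCoprime (x - y) (x + y) ↔ IsCoprime (x + y) (2 * x) := by
  rw [isCoprime_comm, ← IsCoprime.add_mul_left_right_iff (z := 1)]
  ring_nf

theorem isCoprime_sub_add_iff_sub_two_mul (x y : R) :
    IsCoprime (x - y) (x + y) ↔ IsCoprime (y - x) (2 * x) := by
  rw [isCoprime_sub_add_iff_add_two_mul, ← IsCoprime.sub_mul_right_left_iff (z := 1)]
  ring_nf

end CommRing

theorem Int.isCoprime_mul_emod_iff (a b c : ℤ) :
    IsCoprime b (c * (a % b)) ↔ IsCoprime b (c * a) := by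
  have h : c * (a % b) = c * a + b * -(c * (a / b)) := by rw [Int.emod_def]; ring
  rw [h, IsCoprime.add_mul_left_right_iff]

theorem folded_pair_coprime_general (p q r m n : ℤ)
    (hcop : Int.gcd (p - q) (p + q) = 1)
    (hr : r = q - p) (hm : m = p % r) (hn : n = r - m) :
    Int.gcd (m - n) (m + n) = 1 := by
  rw [← Int.isCoprime_iff_gcd_eq_one] at hcop ⊢
  have hmn : m + n = r := by rw [hn]; ring
  rw [isCoprime_sub_add_iff_add_two_mul, hmn, hm, Int.isCoprime_mul_emod_iff]
  rwa [isCoprime_sub_add_iff_sub_two_mul, ← hr] at hcop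

/-- Let `p < q` be positive integers with `gcd(p - q, p + q) = 1`, let `r = q - p`,
let `m = p % r = q % r` be the common remainder of `p` and `q` upon division by `r`,
and let `n = r - m`. Then `gcd(m - n, m + n) = 1`. -/
theorem folded_pair_coprime (p q r m n : ℤ) (hp : 0 < p) (hpq : p < q)
    (hcop : Int.gcd (p - q) (p + q) = 1)
    (hr : r = q - p) (hm : m = p % r) (hm' : m = q % r) (hn : n = r - m) :
    Int.gcd (m - n) (m + n) = 1 :=
  folded_pair_coprime_general p q r m n hcop hr hm hn
end

section
/- With the cores defined as in the Willcocks setup on the board of side 2(p+q) (p < q positive, gcd(p-q, p+q)=1): if 2p < q, then for each i the forward core C'_i and backward core C''_i overlap (have nonempty intersection), and every other pair of distinct cores is disjoint. -/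
/-- The subboard `[a, b) × [c, d)`: cells `(x, y)` with `a ≤ x < b` and `c ≤ y < d`. -/
def Subboard (a b c d : ℤ) : Set (ℤ × ℤ) :=
  {v | a ≤ v.1 ∧ v.1 < b ∧ c ≤ v.2 ∧ v.2 < d}

/-- The four forward cores of the board of side `2(p+q)`. -/
def fwdCore (p q : ℤ) : Fin 4 → Set (ℤ × ℤ)
  | 0 => Subboard p q p q
  | 1 => Subboard (p + q) (2 * q) (2 * p) (p + q)
  | 2 => Subboard (2 * p + q) (p + 2 * q) (2 * p + q) (p + 2 * q)
  | 3 => Subboard (2 * p) (p + q) (p + q) (2 * q)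

/-- The four backward cores of the board of side `2(p+q)`. -/
def bwdCore (p q : ℤ) : Fin 4 → Set (ℤ × ℤ)
  | 0 => Subboard (2 * p) (p + q) (2 * p) (p + q)
  | 1 => Subboard (2 * p + q) (p + 2 * q) p q
  | 2 => Subboard (p + q) (2 * q) (p + q) (2 * q)
  | 3 => Subboard p q (2 * p + q) (p + 2 * q)

/-- When `2p < q`, each forward core `C'_i` overlaps the corresponding backward core
`C''_i`, and every other pair of distinct cores is disjoint. -/
theorem cores_overlap_of_small (p q : ℤ) (hp : 0 < p) (hpq : p < q)
    (hcop : Int.gcd (p - q) (p + q) = 1) (hsmall : 2 * p < q) :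
    (∀ i : Fin 4, (fwdCore p q i ∩ bwdCore p q i).Nonempty) ∧
    (∀ i j : Fin 4, i ≠ j → Disjoint (fwdCore p q i) (fwdCore p q j)) ∧
    (∀ i j : Fin 4, i ≠ j → Disjoint (bwdCore p q i) (bwdCore p q j)) ∧
    (∀ i j : Fin 4, i ≠ j → Disjoint (fwdCore p q i) (bwdCore p q j)) := by

  have hdis : ∀ (A B : Set (ℤ × ℤ)),
      (∀ v : ℤ × ℤ, v ∈ A → v ∈ B → False) → Disjoint A B := by
    intro A B h
    rw [Set.disjoint_left]
    exact fun {v} hv hv' => (h v hv hv').elim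
  refine ⟨?_, ?_, ?_, ?_⟩
  · intro i
    fin_cases i
    · exact ⟨(2*p, 2*p), by simp only [fwdCore, bwdCore, Subboard,
        Set.mem_inter_iff, Set.mem_setOf_eq]; omega⟩
    · exact ⟨(2*p+q, 2*p), by simp only [fwdCore, bwdCore, Subboard,
        Set.mem_inter_iff, Set.mem_setOf_eq]; omega⟩
    · exact ⟨(2*p+q, 2*p+q), by simp only [fwdCore, bwdCore, Subboard,
        Set.mem_inter_iff, Set.mem_setOf_eq]; omega⟩
    · exact ⟨(2*p, 2*p+q), by simp only [fwdCore, bwdCore, Subboard,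
        Set.mem_inter_iff, Set.mem_setOf_eq]; omega⟩
  · intro i j hij
    fin_cases i <;> fin_cases j <;> first
      | exact absurd rfl hij
      | (refine hdis _ _ fun v h1 h2 => ?_
         simp only [fwdCore, bwdCore, Subboard, Set.mem_setOf_eq] at h1 h2
         omega)
  · intro i j hij
    fin_cases i <;> fin_cases j <;> first
      | exact absurd rfl hij
      | (refine hdis _ _ fun v h1 h2 => ?_
         simp only [fwdCore, bwdCore, Subboard, Set.mem_setOf_eq] at h1 h2
         omega)
  · intro i j hij
    fin_cases i <;> fin_cases j <;> first
      | exact absurd rfl hij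
      | (refine hdis _ _ fun v h1 h2 => ?_
         simp only [fwdCore, bwdCore, Subboard, Set.mem_setOf_eq] at h1 h2
         omega)
end
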